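/- arXiv:1502.04805 — 3 statements merged into one kernel-verified Lean document; each statement's English description precedes it below -/
import Mathlib

section
/- Let d ≥ 1, r ≥ 2, and N = (d+1)(r−1) + 1. If x_1, …, x_N are N points of ℝ^d in general position, then there is a partition of {x_1, …, x_N} into r pairwise disjoint subsets F_1, F_2, …, F_r such that the convex hulls of F_1, …, F_r have a common point: conv(F_1) ∩ conv(F_2) ∩ ⋯ ∩ conv(F_r) ≠ ∅. -/
/-!
Sarkaria's argument. Lift the point `x i` with colour `j` to `v j ⊗ (1, x i)` in a space of
dimension `(d + 1)(r - 1) = N - 1`, where `v 0, …, v (r - 1)` span `ℝ^(r-1)` subject only to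
`∑ j, v j = 0`. For each `i` the `r` lifts average to `0`, so by Bárány's colorful
Carathéodory theorem we can pick one colour `c i` per point with `0` in the convex hull of the
chosen lifts. Read coordinatewise, the vanishing combination says that all colour classes carry
the same total weight and the same weighted sum of points, so they share a centre of mass.

Colorful Carathéodory: take the point `p` nearest to `0` over all hulls of rainbow selections.
If `p ≠ 0`, the points supporting `p` lie on the hyperplane `⟪p, ·⟫ = ‖p‖²`, which misses `0`, so
at most `dim` of them are needed. Some colour is then free, and swapping in a point `q` of that
colour with `⟪p, q⟫ ≤ 0` (one exists since `0` lies in that colour's hull) yields a rainbow hull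
containing the segment `[p, q]`, which comes closer to `0` than `p`.
-/

open Finset Module
open scoped InnerProductSpace

theorem AffineIndependent.linearIndependent_of_forall_apply_eq {k V ι : Type*} [Field k]
    [AddCommGroup V] [Module k V] {z : ι → V} (hz : AffineIndependent k z) (φ : V →ₗ[k] k)
    {a : k} (ha : a ≠ 0) (hφ : ∀ i, φ (z i) = a) : LinearIndependent k z := by
  refine linearIndependent_iff'.2 fun s g hg => hz.eq_zero_of_sum_eq_zero ?_ hg
  have := congrArg φ hg
  simp only [map_sum, map_smul, hφ, smul_eq_mul, ← sum_mul, map_zero] at this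
  exact (mul_eq_zero.1 this).resolve_right ha

section InnerProductSpace

variable {W : Type*} [NormedAddCommGroup W] [InnerProductSpace ℝ W]

theorem real_inner_self_le_inner_of_isMinOn_norm {K : Set W} (hK : Convex ℝ K) {p q : W}
    (hp : p ∈ K) (hmin : IsMinOn (‖·‖) K p) (hq : q ∈ K) : ⟪p, p⟫_ℝ ≤ ⟪p, q⟫_ℝ := by
  have : Nonempty K := ⟨⟨p, hp⟩⟩
  have hinf : ‖0 - p‖ = ⨅ w : K, ‖0 - (w : W)‖ :=
    le_antisymm (le_ciInf fun w => by simpa using isMinOn_iff.1 hmin w w.2)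
      (ciInf_le ⟨0, by rintro _ ⟨w, rfl⟩; exact norm_nonneg _⟩ (⟨p, hp⟩ : K))
  have := (norm_eq_iInf_iff_real_inner_le_zero hK hp).1 hinf q hq
  rw [zero_sub, inner_neg_left, inner_sub_right] at this
  linarith

theorem exists_real_inner_nonpos_of_zero_mem_convexHull {s : Set W}
    (hs : (0 : W) ∈ convexHull ℝ s) (p : W) : ∃ y ∈ s, ⟪p, y⟫_ℝ ≤ 0 := by
  by_contra! h
  have hsub : convexHull ℝ s ⊆ {y | 0 < ⟪p, y⟫_ℝ} :=
    convexHull_min h (convex_halfSpace_gt (innerₛₗ ℝ p).isLinear 0)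
  simpa using hsub hs

variable [FiniteDimensional ℝ W]

theorem exists_card_le_finrank_mem_convexHull_image_of_isMinOn_norm {ι : Type*} {y : ι → W}
    {p : W} (hp : p ∈ convexHull ℝ (Set.range y)) (hp0 : p ≠ 0)
    (hmin : IsMinOn (‖·‖) (convexHull ℝ (Set.range y)) p) :
    ∃ s : Finset ι, s.card ≤ finrank ℝ W ∧ p ∈ convexHull ℝ (y '' s) := by
  classical
  obtain ⟨τ, _, z, w, hzy, hz, hw0, hw1, hwz⟩ := eq_pos_convex_span_of_mem_convexHull hp
  have hge (t : τ) : ⟪p, p⟫_ℝ ≤ ⟪p, z t⟫_ℝ :=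
    real_inner_self_le_inner_of_isMinOn_norm (convex_convexHull ℝ _) hp hmin
      (subset_convexHull ℝ _ (hzy ⟨t, rfl⟩))
  have heq (t : τ) : ⟪p, z t⟫_ℝ = ⟪p, p⟫_ℝ := by
    have hzero : ∑ t, w t * (⟪p, z t⟫_ℝ - ⟪p, p⟫_ℝ) = 0 := by
      have : ∑ t, w t * (⟪p, z t⟫_ℝ - ⟪p, p⟫_ℝ)
          = ⟪p, ∑ t, w t • z t⟫_ℝ - (∑ t, w t) * ⟪p, p⟫_ℝ := by
        simp only [mul_sub, sum_sub_distrib, inner_sum, real_inner_smul_right, sum_mul]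
      rw [this, hwz, hw1, one_mul, sub_self]
    have := (sum_eq_zero_iff_of_nonneg fun t _ =>
      mul_nonneg (hw0 t).le (sub_nonneg.2 (hge t))).1 hzero t (mem_univ t)
    exact sub_eq_zero.1 ((mul_eq_zero.1 this).resolve_left (hw0 t).ne')
  have hcard : Fintype.card τ ≤ finrank ℝ W :=
    (hz.linearIndependent_of_forall_apply_eq (innerₛₗ ℝ p) (inner_self_ne_zero.2 hp0)
      heq).fintype_card_le_finrank
  choose g hg using fun t => hzy ⟨t, rfl⟩
  refine ⟨univ.image g, card_image_le.trans hcard, hwz ▸ ?_⟩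
  exact (convex_convexHull ℝ _).sum_mem (fun t _ => (hw0 t).le) hw1
    fun t _ => subset_convexHull ℝ _ ⟨g t, by simp, hg t⟩

theorem colorful_caratheodory_of_inner {ι : Type*} [Fintype ι]
    (hι : finrank ℝ W < Fintype.card ι) {S : ι → Set W} (hSfin : ∀ i, (S i).Finite)
    (hS : ∀ i, (0 : W) ∈ convexHull ℝ (S i)) :
    ∃ y : ι → W, (∀ i, y i ∈ S i) ∧ (0 : W) ∈ convexHull ℝ (Set.range y) := by
  classical
  have hne : (⋃ y ∈ Set.univ.pi S, convexHull ℝ (Set.range y)).Nonempty := by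
    choose y₀ hy₀ using fun i => convexHull_nonempty_iff.1 ⟨0, hS i⟩
    obtain ⟨i⟩ : Nonempty ι := Fintype.card_pos_iff.1 (by omega)
    exact ⟨y₀ i, Set.mem_biUnion (Set.mem_univ_pi.2 hy₀) (subset_convexHull ℝ _ ⟨i, rfl⟩)⟩
  obtain ⟨p, hpK, hmin⟩ := ((Set.Finite.pi hSfin).isCompact_biUnion fun y _ =>
    (Set.finite_range y).isCompact_convexHull ℝ).exists_isMinOn hne continuous_norm.continuousOn
  have hmin' (y : ι → W) (hy : y ∈ Set.univ.pi S) :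
      IsMinOn (‖·‖) (convexHull ℝ (Set.range y)) p :=
    hmin.on_subset
      (Set.subset_biUnion_of_mem (u := fun y => convexHull ℝ (Set.range y)) hy)
  obtain ⟨y, hy, hp⟩ := Set.mem_iUnion₂.1 hpK
  by_cases hp0 : p = 0
  · exact ⟨y, Set.mem_univ_pi.1 hy, hp0 ▸ hp⟩
  obtain ⟨s, hs, hps⟩ :=
    exists_card_le_finrank_mem_convexHull_image_of_isMinOn_norm hp hp0 (hmin' y hy)
  obtain ⟨i₀, -, hi₀⟩ := exists_mem_notMem_of_card_lt_card (s := s) (t := univ)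
    (by simpa using hs.trans_lt hι)
  obtain ⟨q, hq, hpq⟩ := exists_real_inner_nonpos_of_zero_mem_convexHull (hS i₀) p
  set y' := Function.update y i₀ q
  have hy' : y' ∈ Set.univ.pi S := by
    refine Set.mem_univ_pi.2 fun i => ?_
    rcases eq_or_ne i i₀ with rfl | hi
    · simpa [y'] using hq
    · simpa [y', hi] using Set.mem_univ_pi.1 hy i
  have hps' : p ∈ convexHull ℝ (Set.range y') := by
    refine convexHull_mono ?_ hps
    rintro _ ⟨i, hi, rfl⟩
    exact ⟨i, Function.update_of_ne (by rintro rfl; exact hi₀ hi) _ _⟩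
  have := real_inner_self_le_inner_of_isMinOn_norm (convex_convexHull ℝ _) hps' (hmin' y' hy')
    (subset_convexHull ℝ _ ⟨i₀, Function.update_self _ _ _⟩)
  linarith [real_inner_self_pos.2 hp0]

end InnerProductSpace

theorem colorful_caratheodory {V : Type*} [AddCommGroup V] [Module ℝ V] [FiniteDimensional ℝ V]
    {ι : Type*} [Fintype ι] (hι : finrank ℝ V < Fintype.card ι) {S : ι → Set V}
    (hSfin : ∀ i, (S i).Finite) (hS : ∀ i, (0 : V) ∈ convexHull ℝ (S i)) :
    ∃ y : ι → V, (∀ i, y i ∈ S i) ∧ (0 : V) ∈ convexHull ℝ (Set.range y) := by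
  let e : V ≃ₗ[ℝ] EuclideanSpace ℝ (Fin (finrank ℝ V)) := LinearEquiv.ofFinrankEq _ _ (by simp)
  obtain ⟨y, hy, h0⟩ := colorful_caratheodory_of_inner (by simpa using hι)
    (S := fun i => e '' S i) (fun i => (hSfin i).image e) fun i => by
      rw [← LinearEquiv.coe_coe, ← LinearMap.image_convexHull]
      exact ⟨0, hS i, map_zero e⟩
  refine ⟨fun i => e.symm (y i), fun i => ?_, ?_⟩
  · obtain ⟨v, hv, hve⟩ := hy i
    simpa [← hve] using hv
  · rw [Set.range_comp', ← LinearEquiv.coe_coe, ← LinearMap.image_convexHull]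
    exact ⟨0, h0, map_zero _⟩

theorem exists_weights_of_mem_convexHull_range {E ι : Type*} [AddCommGroup E] [Module ℝ E]
    [Fintype ι] {v : ι → E} {x : E} (hx : x ∈ convexHull ℝ (Set.range v)) :
    ∃ w : ι → ℝ, (∀ i, 0 ≤ w i) ∧ ∑ i, w i = 1 ∧ ∑ i, w i • v i = x := by
  classical
  rw [convexHull_range_eq_exists_affineCombination] at hx
  obtain ⟨s, w, hw0, hw1, rfl⟩ := hx
  refine ⟨fun i => if i ∈ s then w i else 0, fun i => ?_, ?_, ?_⟩
  · dsimp only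
    split_ifs with hi
    exacts [hw0 i hi, le_rfl]
  · simpa [sum_ite_mem] using hw1
  · simp [ite_smul, sum_ite_mem, s.affineCombination_eq_linear_combination v w hw1]

theorem zero_mem_convexHull_range_of_sum_eq_zero {E κ : Type*} [AddCommGroup E] [Module ℝ E]
    [Fintype κ] [Nonempty κ] {f : κ → E} (hf : ∑ j, f j = 0) :
    (0 : E) ∈ convexHull ℝ (Set.range f) := by
  refine mem_convexHull_of_exists_fintype (fun _ => (Fintype.card κ : ℝ)⁻¹) f
    (fun _ => by positivity) ?_ (fun j => ⟨j, rfl⟩) ?_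
  · simp
  · rw [← smul_sum, hf, smul_zero]

section Tverberg

variable {E ι : Type*} [AddCommGroup E] [Module ℝ E]

/-- `sarkariaLift r x i j = v j ⊗ (1, x i)`, where `v 0, …, v r ∈ ℝ^r` are
`e 0, …, e (r - 1), -(e 0 + ⋯ + e (r - 1))`. -/
def sarkariaLift (r : ℕ) (x : ι → E) (i : ι) (j : Fin (r + 1)) : Fin r → ℝ × E :=
  fun k => ((if j = k.castSucc then 1 else 0) - (if j = Fin.last r then 1 else 0) : ℝ) • (1, x i)

theorem sum_sarkariaLift (r : ℕ) (x : ι → E) (i : ι) : ∑ j, sarkariaLift r x i j = 0 := by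
  ext k <;> simp [sarkariaLift, Finset.sum_apply, sub_smul, sum_sub_distrib, ite_smul]

variable [Fintype ι]

theorem sum_filter_eq_of_sum_sarkariaLift_eq_zero {r : ℕ} {x : ι → E} {c : ι → Fin (r + 1)}
    {l : ι → ℝ} (h : ∑ i, l i • sarkariaLift r x i (c i) = 0) (j : Fin (r + 1)) :
    ∑ i ∈ univ.filter (c · = j), l i • ((1 : ℝ), x i)
      = ∑ i ∈ univ.filter (c · = Fin.last r), l i • ((1 : ℝ), x i) := by
  induction j using Fin.lastCases with
  | last => rfl
  | cast k =>
    have := congrFun h k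
    simp only [Finset.sum_apply, Pi.smul_apply, sarkariaLift, sub_smul, ite_smul, one_smul,
      zero_smul, smul_sub, smul_ite, smul_zero, sum_sub_distrib, Pi.zero_apply] at this
    rw [sum_filter, sum_filter]
    exact sub_eq_zero.1 this

theorem nonempty_iInter_convexHull_of_sum_filter_eq {κ : Type*} [Fintype κ] [DecidableEq κ]
    (x : ι → E) (c : ι → κ) {l : ι → ℝ} (hl0 : ∀ i, 0 ≤ l i) (hl1 : ∑ i, l i = 1) (j₀ : κ)
    (hc : ∀ j, ∑ i ∈ univ.filter (c · = j), l i • ((1 : ℝ), x i)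
      = ∑ i ∈ univ.filter (c · = j₀), l i • ((1 : ℝ), x i)) :
    (⋂ j, convexHull ℝ (x '' (univ.filter (c · = j)))).Nonempty := by
  have hweight (j : κ) :
      ∑ i ∈ univ.filter (c · = j), l i = ∑ i ∈ univ.filter (c · = j₀), l i := by
    simpa [Prod.fst_sum] using congrArg Prod.fst (hc j)
  have hpos : 0 < ∑ i ∈ univ.filter (c · = j₀), l i := by
    have : ∑ j, ∑ i ∈ univ.filter (c · = j), l i = 1 := by rw [sum_fiberwise, hl1]
    simp only [hweight, sum_const, card_univ, nsmul_eq_mul] at this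
    exact (sum_nonneg fun i _ => hl0 i).lt_of_ne (by rintro h; simp [← h] at this)
  refine ⟨(univ.filter (c · = j₀)).centerMass l x, Set.mem_iInter.2 fun j => ?_⟩
  have hcm :
      (univ.filter (c · = j)).centerMass l x = (univ.filter (c · = j₀)).centerMass l x := by
    have hsum :
        ∑ i ∈ univ.filter (c · = j), l i • x i = ∑ i ∈ univ.filter (c · = j₀), l i • x i := by
      simpa [Prod.snd_sum] using congrArg Prod.snd (hc j)
    rw [Finset.centerMass, Finset.centerMass, hweight, hsum]
  rw [← hcm]
  exact centerMass_mem_convexHull _ (fun i _ => hl0 i) (hweight j ▸ hpos)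
    fun i hi => Set.mem_image_of_mem x (mem_coe.2 hi)

end Tverberg

theorem tverberg_general (d r : ℕ) (hr : 2 ≤ r)
    (N : ℕ) (hN : N = (d+1)*(r-1)+1)
    (x : Fin N → EuclideanSpace ℝ (Fin d)) :
    ∃ F : Fin r → Finset (Fin N),
      (∀ i j, i ≠ j → Disjoint (F i) (F j)) ∧
      (Finset.univ.biUnion F = Finset.univ) ∧
      (⋂ i, convexHull ℝ (x '' (F i))).Nonempty := by
  obtain ⟨r, rfl⟩ : ∃ r', r = r' + 1 := ⟨r - 1, by omega⟩
  have hdim : finrank ℝ (Fin r → ℝ × EuclideanSpace ℝ (Fin d)) < Fintype.card (Fin N) := by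
    simp only [finrank_pi_fintype, finrank_prod, finrank_self, finrank_euclideanSpace,
      Fintype.card_fin, sum_const, card_univ, smul_eq_mul, hN, add_tsub_cancel_right]
    lia
  obtain ⟨y, hy, h0⟩ := colorful_caratheodory hdim (fun i => Set.finite_range _)
    fun i => zero_mem_convexHull_range_of_sum_eq_zero (sum_sarkariaLift r x i)
  choose c hc using hy
  obtain ⟨l, hl0, hl1, hl⟩ := exists_weights_of_mem_convexHull_range h0
  refine ⟨fun j => univ.filter (c · = j), fun j j' hjj' => ?_, ?_, ?_⟩
  · exact disjoint_filter.2 fun i _ h h' => hjj' (h ▸ h')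
  · ext i
    simp
  · refine nonempty_iInter_convexHull_of_sum_filter_eq x c hl0 hl1 (Fin.last r) ?_
    refine sum_filter_eq_of_sum_sarkariaLift_eq_zero ?_
    simpa [hc] using hl

/-- **Classical Tverberg theorem.** -/
theorem tverberg (d r : ℕ) (hd : 1 ≤ d) (hr : 2 ≤ r)
    (N : ℕ) (hN : N = (d+1)*(r-1)+1)
    (x : Fin N → EuclideanSpace ℝ (Fin d))
    (hgen : ∀ s : Finset (Fin N), s.card ≤ d+1 →
      AffineIndependent ℝ (fun i : s => x i.1)) :
    ∃ F : Fin r → Finset (Fin N),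
      (∀ i j, i ≠ j → Disjoint (F i) (F j)) ∧
      (Finset.univ.biUnion F = Finset.univ) ∧
      (⋂ i, convexHull ℝ (x '' (F i))).Nonempty :=
  tverberg_general d r hr N hN x
end

section
/- Let d ≥ 1, r ≥ 3, and N = (d+1)(r−1). Suppose that BMZ(d+1, r, ℝ^{d+1}) holds for every special coloring of Δ_{N'}, N' = (d+2)(r−1). Then BMZ(d, r, ℝ^d) holds for every coloring C_0, C_1, …, C_{d+1}, C_{d+2} of Δ_N with |C_0| = r−2, |C_i| = r−1 for 1 ≤ i ≤ d, and |C_{d+1}| = |C_{d+2}| = 1. -/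
/-- The face of the standard `N`-simplex spanned by the set `S` of vertices:
points whose barycentric coordinates vanish outside `S`. -/
def simplexFace (N : ℕ) (S : Finset (Fin (N+1))) : Set (stdSimplex ℝ (Fin (N+1))) :=
  {x | ∀ i, i ∉ S → (x : Fin (N+1) → ℝ) i = 0}

/-- `BMZ r C Y` : for every continuous map `f : Δ_N → Y` there are `r` pairwise
disjoint rainbow faces (for the coloring `C`) of `Δ_N` whose `f`-images have a
common point. -/
def BMZ {N m : ℕ} (r : ℕ) (C : Fin m → Finset (Fin (N+1)))
    (Y : Type*) [TopologicalSpace Y] : Prop :=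
  ∀ f : stdSimplex ℝ (Fin (N+1)) → Y, Continuous f →
    ∃ σ : Fin r → Finset (Fin (N+1)),
      (∀ i j, (σ i ∩ C j).card ≤ 1) ∧
      (∀ i j, i ≠ j → Disjoint (σ i) (σ j)) ∧
      (⋂ i, f '' simplexFace N (σ i)).Nonempty

/-- `C` is a coloring of the vertices of `Δ_N`: the classes are pairwise
disjoint and cover all the vertices. -/
def IsColoring {N m : ℕ} (C : Fin m → Finset (Fin (N+1))) : Prop :=
  (∀ i j, i ≠ j → Disjoint (C i) (C j)) ∧ Finset.univ.biUnion C = Finset.univ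

/-- A special coloring of `Δ_N` for the parameters `(d, r)`:
`d+2` classes `C_0, …, C_{d+1}` with `|C_i| = r-1` for `0 ≤ i ≤ d` and
`|C_{d+1}| = 1`. -/
def IsSpecialColoring (d r N : ℕ) (C : Fin (d+2) → Finset (Fin (N+1))) : Prop :=
  IsColoring C ∧ (∀ i : Fin (d+2), (i : ℕ) ≤ d → (C i).card = r - 1) ∧
    (C ⟨d+1, by omega⟩).card = 1

/-!
Add `r - 1` new vertices to `Δ_N`: the last one joins `C_0` and the others join `C_{d+1}`, which
gives a special coloring of `Δ_{N'}`. Given `f : Δ_N → ℝ^d`, compose it with the retraction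
`Δ_{N'} → Δ_N` that sends every new vertex to some old one, and append as an extra coordinate the
total weight on the new vertices. Among `r` pairwise disjoint faces at most `r - 1` contain a new
vertex, so the common value has last coordinate `0`. Hence every witness lies in the face spanned
by old vertices, where the retraction is the identity, and the traces of the `r` faces on the old
vertices are the required rainbow faces.
-/

open Finset

lemma mem_simplexFace {N : ℕ} {S : Finset (Fin (N+1))} {x : stdSimplex ℝ (Fin (N+1))} :
    x ∈ simplexFace N S ↔ ∀ i ∉ S, x i = 0 := Iff.rfl

lemma simplexFace_mono {N : ℕ} {S T : Finset (Fin (N+1))} (h : S ⊆ T) :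
    simplexFace N S ⊆ simplexFace N T :=
  fun _ hx i hi => hx i fun hiS => hi (h hiS)

lemma Finset.exists_disjoint_of_card_lt {ι α : Type*} [Fintype ι] {σ : ι → Finset α}
    (hσ : ∀ i j, i ≠ j → Disjoint (σ i) (σ j)) {T : Finset α} (hT : #T < Fintype.card ι) :
    ∃ i, Disjoint (σ i) T := by
  by_contra! h
  choose v hvσ hvT using fun i => Finset.not_disjoint_iff.1 (h i)
  obtain ⟨i, -, j, -, hij, hv⟩ :=
    exists_ne_map_eq_of_card_lt_of_maps_to (s := univ) hT fun i _ => hvT i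
  exact Finset.disjoint_left.1 (hσ i j hij) (hvσ i) (hv ▸ hvσ j)

section Collapse

variable {N M : ℕ} (e : Fin (N+1) ↪ Fin (M+1))

def outsideMass (x : stdSimplex ℝ (Fin (M+1))) : ℝ :=
  ∑ v ∈ (univ.map e)ᶜ, x v

lemma continuous_outsideMass : Continuous (outsideMass e) :=
  continuous_finsetSum _ fun v _ => (continuous_apply v).comp continuous_subtype_val

lemma outsideMass_eq_zero_iff {x : stdSimplex ℝ (Fin (M+1))} :
    outsideMass e x = 0 ↔ x ∈ simplexFace M (univ.map e) := by
  simp [outsideMass, sum_eq_zero_iff_of_nonneg, mem_simplexFace]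

lemma map_invFun_mem_simplexFace {x : stdSimplex ℝ (Fin (M+1))} {σ : Finset (Fin (M+1))}
    (hxσ : x ∈ simplexFace M σ) (hxe : x ∈ simplexFace M (univ.map e)) :
    stdSimplex.map (Function.invFun e) x ∈ simplexFace N (σ.preimage e e.injective.injOn) := by
  intro j hj
  rw [stdSimplex.map_coe, FunOnFinite.linearMap_apply_apply]
  refine sum_eq_zero fun v hv => ?_
  by_cases hve : v ∈ univ.map e
  · obtain ⟨w, -, rfl⟩ := mem_map.1 hve
    rw [mem_filter, Function.leftInverse_invFun e.injective w] at hv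
    exact hxσ _ (by simpa [hv.2] using hj)
  · exact hxe v hve

end Collapse

theorem BMZ.of_embedding {N M m r : ℕ} (e : Fin (N+1) ↪ Fin (M+1)) (hM : M < N + r)
    {C : Fin m → Finset (Fin (N+1))} {C' : Fin m → Finset (Fin (M+1))}
    (hC : ∀ j, (C j).map e ⊆ C' j) {Y : Type*} [TopologicalSpace Y]
    (h : BMZ r C' (Y × ℝ)) : BMZ r C Y := by
  intro f hf
  obtain ⟨σ', hrainbow, hdisj, p, hp⟩ :=
    h (fun x => (f (stdSimplex.map (Function.invFun e) x), outsideMass e x))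
      ((hf.comp (stdSimplex.continuous_map _)).prodMk (continuous_outsideMass e))
  choose x hxσ hxp using Set.mem_iInter.1 hp
  have hNM : N ≤ M := by simpa using Fintype.card_le_of_embedding e
  obtain ⟨i₀, hi₀⟩ : ∃ i, Disjoint (σ' i) (univ.map e)ᶜ :=
    exists_disjoint_of_card_lt hdisj (by simp [card_compl]; omega)
  have hp₂ : p.2 = 0 := by
    rw [← congrArg Prod.snd (hxp i₀)]
    exact (outsideMass_eq_zero_iff e).2
      (simplexFace_mono (disjoint_compl_right_iff.1 hi₀) (hxσ i₀))
  have hxe : ∀ i, x i ∈ simplexFace M (univ.map e) := fun i =>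
    (outsideMass_eq_zero_iff e).1 ((congrArg Prod.snd (hxp i)).trans hp₂)
  refine ⟨fun i => (σ' i).preimage e e.injective.injOn, fun i j => ?_, fun i j hij => ?_,
    p.1, Set.mem_iInter.2 fun i =>
      ⟨_, map_invFun_mem_simplexFace e (hxσ i) (hxe i), congrArg Prod.fst (hxp i)⟩⟩
  · refine le_trans (card_le_card_of_injOn e (fun w hw => ?_) e.injective.injOn) (hrainbow i j)
    simp only [coe_inter, Set.mem_inter_iff, mem_coe, mem_preimage] at hw ⊢
    exact ⟨hw.1, hC j (mem_map_of_mem e hw.2)⟩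
  · exact disjoint_left.2 fun w hi hj =>
      disjoint_left.1 (hdisj i j hij) (mem_preimage.1 hi) (mem_preimage.1 hj)

theorem BMZ.of_continuous_injective {N m r : ℕ} {C : Fin m → Finset (Fin (N+1))}
    {Y Z : Type*} [TopologicalSpace Y] [TopologicalSpace Z] {φ : Z → Y}
    (hφ : Continuous φ) (hφinj : φ.Injective) (h : BMZ r C Y) : BMZ r C Z := by
  intro f hf
  obtain ⟨σ, hrainbow, hdisj, hcommon⟩ := h (φ ∘ f) (hφ.comp hf)
  refine ⟨σ, hrainbow, hdisj, ?_⟩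
  cases isEmpty_or_nonempty (Fin r)
  · simpa using @Set.univ_nonempty _ ⟨f (Classical.arbitrary _)⟩
  · simp_rw [Set.image_comp, ← hφinj.injOn.image_iInter_eq] at hcommon
    exact Set.image_nonempty.1 hcommon

section Extension

variable {N M m : ℕ} (e : Fin (N+1) ↪ Fin (M+1))

def extendColoring (C : Fin m → Finset (Fin (N+1))) (c : Fin (M+1) → Fin m) (j : Fin m) :
    Finset (Fin (M+1)) :=
  (C j).map e ∪ {v ∈ (univ.map e)ᶜ | c v = j}

lemma disjoint_map_filter_compl (s : Finset (Fin (N+1))) (p : Fin (M+1) → Prop)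
    [DecidablePred p] : Disjoint (s.map e) {v ∈ (univ.map e)ᶜ | p v} :=
  disjoint_compl_right.mono (map_subset_map.2 (subset_univ s)) (filter_subset _ _)

lemma card_extendColoring (C : Fin m → Finset (Fin (N+1))) (c : Fin (M+1) → Fin m) (j : Fin m) :
    #(extendColoring e C c j) = #(C j) + #{v ∈ (univ.map e)ᶜ | c v = j} := by
  rw [extendColoring, card_union_of_disjoint (disjoint_map_filter_compl e _ _), card_map]

lemma IsColoring.extend {C : Fin m → Finset (Fin (N+1))} (hC : IsColoring C)
    (c : Fin (M+1) → Fin m) : IsColoring (extendColoring e C c) := by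
  refine ⟨fun i j hij => ?_, eq_univ_of_forall fun v => mem_biUnion.2 ?_⟩
  · simp only [extendColoring, disjoint_union_left, disjoint_union_right]
    exact ⟨⟨(disjoint_map e).2 (hC.1 i j hij), (disjoint_map_filter_compl e _ _).symm⟩,
      disjoint_map_filter_compl e _ _,
      disjoint_filter.2 fun v _ hi hj => hij (hi.symm.trans hj)⟩
  · by_cases hv : v ∈ univ.map e
    · obtain ⟨w, -, rfl⟩ := mem_map.1 hv
      obtain ⟨j, -, hj⟩ := mem_biUnion.1 (hC.2 ▸ mem_univ w)
      exact ⟨j, mem_univ _, mem_union_left _ (mem_map_of_mem e hj)⟩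
    · exact ⟨c v, mem_univ _, mem_union_right _ (mem_filter.2 ⟨mem_compl.2 hv, rfl⟩)⟩

end Extension

lemma Finset.card_filter_eq_of_eq_of_forall_ne {α β : Type*} [DecidableEq α] [DecidableEq β]
    {T : Finset α} {a : α} (ha : a ∈ T) {c : α → β} {i k : β} (hik : i ≠ k) (hca : c a = i)
    (hc : ∀ v, v ≠ a → c v = k) (j : β) :
    #{v ∈ T | c v = j} = if j = i then 1 else if j = k then #T - 1 else 0 := by
  split_ifs with hi hk
  · subst hi
    rw [card_eq_one]
    exact ⟨a, by ext v; by_cases hv : v = a <;> simp [hv, ha, hca, hc, hik.symm]⟩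
  · subst hk
    rw [← card_erase_of_mem ha]
    congr 1
    ext v
    by_cases hv : v = a <;> simp [hv, hca, hc, hik]
  · refine card_eq_zero.2 (filter_eq_empty_iff.2 fun v _ hcv => ?_)
    by_cases hv : v = a
    · subst hv
      exact hi (hcv.symm.trans hca)
    · exact hk (hcv.symm.trans (hc v hv))

def newVertexColor (d M : ℕ) (v : Fin (M+1)) : Fin (d+3) :=
  if v = Fin.last M then 0 else ⟨d+1, by omega⟩

lemma isSpecialColoring_extendColoring {d r N : ℕ} (hr : 2 ≤ r)
    {C : Fin (d+3) → Finset (Fin (N+1))} (hC : IsColoring C)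
    (h0 : #(C 0) = r - 2)
    (hmid : ∀ i : Fin (d+3), 1 ≤ (i : ℕ) → (i : ℕ) ≤ d → #(C i) = r - 1)
    (h1 : #(C ⟨d+1, by omega⟩) = 1) (h2 : #(C ⟨d+2, by omega⟩) = 1) :
    IsSpecialColoring (d+1) r (N+(r-1))
      (extendColoring (Fin.castLEEmb (by omega)) C (newVertexColor d (N+(r-1)))) := by
  set e : Fin (N+1) ↪ Fin (N+(r-1)+1) := Fin.castLEEmb (by omega)
  have hlast : Fin.last (N+(r-1)) ∈ (univ.map e)ᶜ := by simp [e, Fin.ext_iff]; omega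
  have hnew : #(univ.map e)ᶜ = r - 1 := by simp [card_compl]
  have hcard (i : Fin (d+3)) : #(extendColoring e C (newVertexColor d (N+(r-1))) i) =
      #(C i) + if i = 0 then 1 else if i = ⟨d+1, by omega⟩ then r - 2 else 0 := by
    rw [card_extendColoring, card_filter_eq_of_eq_of_forall_ne (c := newVertexColor d _) hlast
      (by simp [Fin.ext_iff]) (if_pos rfl) (fun v hv => if_neg hv), hnew, Nat.sub_sub]
  refine ⟨hC.extend e _, fun i hi => ?_, by simp [hcard, Fin.ext_iff, h2]⟩
  rw [hcard]
  obtain rfl | hi0 := eq_or_ne i 0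
  · rw [if_pos rfl, h0]
    omega
  by_cases hid : i = ⟨d+1, by omega⟩
  · rw [if_neg hi0, if_pos hid, hid, h1]
    omega
  · rw [if_neg hi0, if_neg hid, hmid i (Nat.one_le_iff_ne_zero.2 (Fin.val_ne_iff.2 hi0))
      (by have := Fin.val_ne_iff.2 hid; simp only at this; omega), add_zero]

/-- **Proposition 2.1**: moving one vertex of `C_0` into a new singleton class. -/
theorem reduction_prop_one_singleton (d r : ℕ) (hr : 3 ≤ r)
    (N : ℕ) (hN : N = (d+1)*(r-1))
    (hyp : ∀ C' : Fin (d+3) → Finset (Fin ((d+2)*(r-1)+1)),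
      IsSpecialColoring (d+1) r ((d+2)*(r-1)) C' →
      BMZ r C' (EuclideanSpace ℝ (Fin (d+1)))) :
    ∀ C : Fin (d+3) → Finset (Fin (N+1)),
      IsColoring C →
      (C 0).card = r - 2 →
      (∀ i : Fin (d+3), 1 ≤ (i : ℕ) → (i : ℕ) ≤ d → (C i).card = r - 1) →
      (C ⟨d+1, by omega⟩).card = 1 →
      (C ⟨d+2, by omega⟩).card = 1 →
      BMZ r C (EuclideanSpace ℝ (Fin d)) := by
  intro C hC h0 hmid h1 h2
  rw [show (d+2)*(r-1) = N + (r-1) by rw [hN]; ring] at hyp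
  have hspecial := isSpecialColoring_extendColoring (by omega) hC h0 hmid h1 h2
  let snoc (p : EuclideanSpace ℝ (Fin d) × ℝ) : EuclideanSpace ℝ (Fin (d+1)) :=
    WithLp.toLp 2 (Fin.snoc (WithLp.ofLp p.1) p.2)
  have hsnoc : Continuous snoc := (PiLp.continuous_toLp 2 _).comp
    (((PiLp.continuous_ofLp 2 fun _ : Fin d => ℝ).comp continuous_fst).finSnoc continuous_snd)
  have hsnoc_inj : snoc.Injective := fun p q hpq => by
    obtain ⟨h₁, h₂⟩ := Fin.snoc_injective2 (WithLp.toLp_injective 2 hpq)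
    exact Prod.ext (WithLp.ofLp_injective 2 h₁) h₂
  exact ((hyp _ hspecial).of_continuous_injective hsnoc hsnoc_inj).of_embedding _ (by omega)
    fun _ => subset_union_left
end

section
/- Let d ≥ 1, r ≥ 4, let q be an integer with 2 ≤ q ≤ r−2, and let N = (d+1)(r−1). Suppose that BMZ(d+1, r, ℝ^{d+1}) holds for every special coloring of Δ_{N'}, N' = (d+2)(r−1). Then BMZ(d, r, ℝ^d) holds for every coloring C_0, C_1, …, C_{d+1}, C_{d+2} of Δ_N with |C_0| = r−1−q, |C_i| = r−1 for 1 ≤ i ≤ d, |C_{d+1}| = 1, and |C_{d+2}| = q. -/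
/-!
Add `r - 1` new vertices to `Δ_N`: `q` of them join `C_0` and the other `r - 1 - q` join
`C_{d+2}`, which turns the coloring into a special coloring of `Δ_{N'}` (after swapping the
labels `d+1` and `d+2`). A map `f : Δ_N → ℝ^d` extends to `Δ_{N'} → ℝ^d × ℝ` by first pushing
the mass of the new vertices onto a fixed old vertex and recording that mass as the last
coordinate. Of `r` pairwise disjoint faces one avoids all `r - 1` new vertices, so the common
point has last coordinate `0`; hence all witnesses live on old faces, which are again rainbow.
-/

open Finset Function

theorem exists_disjoint_of_card_lt {β : Type*} {r : ℕ} (σ : Fin r → Finset β)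
    (hσ : Pairwise (Disjoint on σ)) (s : Finset β) (hs : s.card < r) :
    ∃ i, Disjoint (σ i) s := by
  by_contra! hmeet
  choose v hv using fun i => not_disjoint_iff.1 (hmeet i)
  obtain ⟨i, -, j, -, hij, hvij⟩ := exists_ne_map_eq_of_card_lt_of_maps_to
    (s := univ) (t := s) (by simpa using hs) (f := v) fun i _ => (hv i).2
  exact disjoint_left.1 (hσ hij) (hv i).1 (hvij ▸ (hv j).1)

section Retraction

variable {N M : ℕ} (ι : Fin (N+1) ↪ Fin (M+1))

noncomputable def massOffRange (x : stdSimplex ℝ (Fin (M+1))) : ℝ :=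
  ∑ v ∈ (univ.map ι)ᶜ, x.1 v

theorem massOffRange_nonneg (x : stdSimplex ℝ (Fin (M+1))) : 0 ≤ massOffRange ι x :=
  sum_nonneg fun v _ => x.2.1 v

theorem continuous_massOffRange : Continuous (massOffRange ι) :=
  continuous_finsetSum _ fun v _ => (continuous_apply v).comp continuous_subtype_val

theorem massOffRange_eq_zero_of_mem_simplexFace {S : Finset (Fin (M+1))}
    {x : stdSimplex ℝ (Fin (M+1))} (hx : x ∈ simplexFace M S) (hS : Disjoint S (univ.map ι)ᶜ) :
    massOffRange ι x = 0 :=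
  sum_eq_zero fun v hv => hx v (disjoint_right.1 hS hv)

theorem retract_mem_stdSimplex (x : stdSimplex ℝ (Fin (M+1))) :
    (fun k => x.1 (ι k) + if k = 0 then massOffRange ι x else 0) ∈ stdSimplex ℝ (Fin (N+1)) := by
  refine ⟨fun k => add_nonneg (x.2.1 _) ?_, ?_⟩
  · split_ifs
    exacts [massOffRange_nonneg ι x, le_rfl]
  · rw [sum_add_distrib, sum_ite_eq' univ 0, if_pos (mem_univ _), ← sum_map univ ι,
      massOffRange, sum_add_sum_compl]
    exact x.2.2

noncomputable def retract (x : stdSimplex ℝ (Fin (M+1))) : stdSimplex ℝ (Fin (N+1)) :=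
  ⟨_, retract_mem_stdSimplex ι x⟩

theorem continuous_retract : Continuous (retract ι) := by
  refine Continuous.subtype_mk (continuous_pi fun k => ?_) _
  refine ((continuous_apply (ι k)).comp continuous_subtype_val).add ?_
  split_ifs
  exacts [continuous_massOffRange ι, continuous_const]

theorem retract_mem_simplexFace {S : Finset (Fin (M+1))} {x : stdSimplex ℝ (Fin (M+1))}
    (hx : x ∈ simplexFace M S) (hmass : massOffRange ι x = 0) :
    retract ι x ∈ simplexFace N (S.preimage ι ι.injective.injOn) := by
  intro k hk
  change x.1 (ι k) + (if k = 0 then massOffRange ι x else 0) = 0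
  rw [show x.1 (ι k) = 0 from hx (ι k) (by simpa using hk), hmass, ite_self, add_zero]

end Retraction

theorem BMZ.of_extension {N M m m' r : ℕ} (ι : Fin (N+1) ↪ Fin (M+1))
    {C : Fin m → Finset (Fin (N+1))} {C' : Fin m' → Finset (Fin (M+1))}
    (hnew : (univ.map ι)ᶜ.card < r) (hC : ∀ j, ∃ j', (C j).map ι ⊆ C' j')
    {Y Z : Type*} [TopologicalSpace Y] [TopologicalSpace Z] (e : Y × ℝ → Z)
    (he : Continuous e) (he_inj : Injective e) (h : BMZ r C' Z) : BMZ r C Y := by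
  intro f hf
  obtain ⟨σ', hrainbow, hdisj, z, hz⟩ := h (fun x => e (f (retract ι x), massOffRange ι x))
    (he.comp ((hf.comp (continuous_retract ι)).prodMk (continuous_massOffRange ι)))
  choose x hxσ hxz using Set.mem_iInter.1 hz
  obtain ⟨i₀, hi₀⟩ := exists_disjoint_of_card_lt σ' hdisj _ hnew
  have hfiber : ∀ i, f (retract ι (x i)) = f (retract ι (x i₀)) ∧
      massOffRange ι (x i) = massOffRange ι (x i₀) :=
    fun i => Prod.ext_iff.1 (he_inj ((hxz i).trans (hxz i₀).symm))
  have hmass : ∀ i, massOffRange ι (x i) = 0 := fun i =>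
    (hfiber i).2.trans (massOffRange_eq_zero_of_mem_simplexFace ι (hxσ i₀) hi₀)
  refine ⟨fun i => (σ' i).preimage ι ι.injective.injOn, fun i j => ?_, fun i j hij => ?_,
    f (retract ι (x i₀)), Set.mem_iInter.2 fun i =>
      ⟨_, retract_mem_simplexFace ι (hxσ i) (hmass i), (hfiber i).1⟩⟩
  · obtain ⟨j', hj'⟩ := hC j
    refine (card_le_card_of_injOn ι (fun k hk => ?_) ι.injective.injOn).trans (hrainbow i j')
    simp only [coe_inter, Set.mem_inter_iff, mem_coe, mem_preimage] at hk ⊢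
    exact ⟨hk.1, hj' (mem_map_of_mem ι hk.2)⟩
  · exact disjoint_left.2 fun k hki hkj =>
      disjoint_left.1 (hdisj i j hij) (mem_preimage.1 hki) (mem_preimage.1 hkj)

section Coloring

variable {N m : ℕ} {C : Fin m → Finset (Fin (N+1))}

theorem isColoring_fibers {M : ℕ} (c : Fin (M+1) → Fin m) :
    IsColoring fun j => univ.filter (c · = j) := by
  refine ⟨fun i j hij => disjoint_filter.2 fun k _ hi hj => hij (hi ▸ hj), ?_⟩
  exact eq_univ_of_forall fun k => mem_biUnion.2 ⟨c k, mem_univ _, by simp⟩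

theorem IsColoring.exists_color (hC : IsColoring C) :
    ∃ c : Fin (N+1) → Fin m, ∀ j, C j = univ.filter (c · = j) := by
  choose c _ hc using fun k => mem_biUnion.1 (hC.2 ▸ mem_univ k)
  refine ⟨c, fun j => ext fun k => ?_⟩
  rw [mem_filter, and_iff_right (mem_univ k)]
  refine ⟨fun hk => ?_, fun hk => hk ▸ hc k⟩
  by_contra hne
  exact disjoint_left.1 (hC.1 _ _ hne) (hc k) hk

theorem IsColoring.comp_equiv (hC : IsColoring C) (τ : Fin m ≃ Fin m) : IsColoring (C ∘ τ) := by
  refine ⟨fun i j hij => hC.1 _ _ (τ.injective.ne hij), eq_univ_of_forall fun k => ?_⟩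
  obtain ⟨j, -, hj⟩ := mem_biUnion.1 (hC.2 ▸ mem_univ k)
  exact mem_biUnion.2 ⟨τ.symm j, mem_univ _, by simpa using hj⟩

theorem IsColoring.exists_extension (hC : IsColoring C) {s : Fin m → ℕ}
    (hs : ∀ j, (C j).card ≤ s j) {M : ℕ} (hM : ∑ j, s j = M + 1) :
    ∃ (ι : Fin (N+1) ↪ Fin (M+1)) (C' : Fin m → Finset (Fin (M+1))),
      IsColoring C' ∧ (∀ j, (C' j).card = s j) ∧ ∀ j, (C j).map ι ⊆ C' j := by
  obtain ⟨c, hc⟩ := hC.exists_color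
  have hfiber : ∀ j, Nonempty ({k // c k = j} ↪ Fin (s j)) := fun j =>
    Embedding.nonempty_of_card_le (by
      rw [Fintype.card_subtype, ← hc, Fintype.card_fin]; exact hs j)
  let g j := (hfiber j).some
  let E : (Σ j, Fin (s j)) ≃ Fin (M+1) :=
    Fintype.equivFinOfCardEq (by simp [Fintype.card_sigma, hM])
  refine ⟨(Equiv.sigmaFiberEquiv c).symm.toEmbedding.trans
      ((Embedding.sigmaMap (.refl _) g).trans E.toEmbedding),
    fun j => univ.filter (fun v => (E.symm v).1 = j), isColoring_fibers _, fun j => ?_,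
    fun j => ?_⟩
  · rw [← Fintype.card_subtype, ← Fintype.card_fin (s j)]
    exact Fintype.card_congr
      ((E.symm.subtypeEquiv (q := fun t => t.1 = j) fun _ => Iff.rfl).trans (Equiv.sigmaSubtype j))
  · intro v hv
    obtain ⟨k, hk, rfl⟩ := mem_map.1 hv
    rw [hc, mem_filter] at hk
    simp only [mem_filter, mem_univ, true_and, Embedding.trans_apply, Equiv.coe_toEmbedding,
      Equiv.symm_apply_apply]
    exact hk.2

end Coloring

noncomputable def euclideanSnoc (d : ℕ) (p : EuclideanSpace ℝ (Fin d) × ℝ) :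
    EuclideanSpace ℝ (Fin (d+1)) :=
  WithLp.toLp 2 (Fin.snoc (α := fun _ => ℝ) p.1.ofLp p.2)

theorem continuous_euclideanSnoc (d : ℕ) : Continuous (euclideanSnoc d) :=
  (PiLp.continuous_toLp 2 _).comp
    (((PiLp.continuous_ofLp 2 fun _ : Fin d => ℝ).comp continuous_fst).finSnoc continuous_snd)

theorem injective_euclideanSnoc (d : ℕ) : Injective (euclideanSnoc d) := by
  intro p p' h
  obtain ⟨h1, h2⟩ := Fin.snoc_injective2 (WithLp.toLp_injective 2 h)
  exact Prod.ext (WithLp.ofLp_injective 2 h1) h2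

section SpecialSizes

variable {d r : ℕ}

def specialSize (d r : ℕ) (j : Fin (d+3)) : ℕ := if (j : ℕ) ≤ d+1 then r-1 else 1

theorem sum_specialSize : ∑ j, specialSize d r j = (d+2)*(r-1) + 1 := by
  rw [Fin.sum_univ_castSucc]
  simp only [specialSize, Fin.val_castSucc, Fin.is_le, if_true, Fin.val_last,
    Nat.not_succ_le_self, if_false, sum_const, card_univ, Fintype.card_fin, smul_eq_mul]

theorem isSpecialColoring_of_card_eq_specialSize {M : ℕ} {C : Fin (d+3) → Finset (Fin (M+1))}
    (hC : IsColoring C) (hcard : ∀ j, (C j).card = specialSize d r j) :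
    IsSpecialColoring (d+1) r M C :=
  ⟨hC, fun j hj => (hcard j).trans (if_pos hj), (hcard _).trans (if_neg (by simp))⟩

theorem card_swap_le_specialSize {q N : ℕ} (hq : q ≤ r - 1) {C : Fin (d+3) → Finset (Fin (N+1))}
    (hC0 : (C 0).card = r - 1 - q)
    (hCi : ∀ i : Fin (d+3), 1 ≤ (i : ℕ) → (i : ℕ) ≤ d → (C i).card = r - 1)
    (hCd1 : (C ⟨d+1, by omega⟩).card = 1) (hCd2 : (C ⟨d+2, by omega⟩).card = q) (j : Fin (d+3)) :
    (C (Equiv.swap ⟨d+1, by omega⟩ ⟨d+2, by omega⟩ j)).card ≤ specialSize d r j := by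
  by_cases h1 : (j : ℕ) = d+1
  · rw [show j = ⟨d+1, by omega⟩ from Fin.ext h1, Equiv.swap_apply_left, hCd2]
    simpa [specialSize] using hq
  by_cases h2 : (j : ℕ) = d+2
  · rw [show j = ⟨d+2, by omega⟩ from Fin.ext h2, Equiv.swap_apply_right, hCd1]
    simp [specialSize]
  rw [Equiv.swap_apply_of_ne_of_ne (fun h => h1 (by simp [h])) (fun h => h2 (by simp [h])),
    specialSize, if_pos (by omega)]
  by_cases h0 : (j : ℕ) = 0
  · rw [show j = 0 from Fin.ext h0, hC0]
    exact Nat.sub_le _ _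
  · rw [hCi j (by omega) (by omega)]

end SpecialSizes

/-- **Proposition 2.2**: moving `q` vertices of `C_0` into one new class of size `q`. -/
theorem reduction_prop_q_vertices (d r q : ℕ) (hr : 4 ≤ r)
    (hq2 : q ≤ r - 2)
    (N : ℕ) (hN : N = (d+1)*(r-1))
    (hyp : ∀ C' : Fin (d+3) → Finset (Fin ((d+2)*(r-1)+1)),
      IsSpecialColoring (d+1) r ((d+2)*(r-1)) C' →
      BMZ r C' (EuclideanSpace ℝ (Fin (d+1)))) :
    ∀ C : Fin (d+3) → Finset (Fin (N+1)),
      IsColoring C →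
      (C 0).card = r - 1 - q →
      (∀ i : Fin (d+3), 1 ≤ (i : ℕ) → (i : ℕ) ≤ d → (C i).card = r - 1) →
      (C ⟨d+1, by omega⟩).card = 1 →
      (C ⟨d+2, by omega⟩).card = q →
      BMZ r C (EuclideanSpace ℝ (Fin d)) := by
  intro C hC hC0 hCi hCd1 hCd2
  let τ := Equiv.swap (⟨d+1, by omega⟩ : Fin (d+3)) ⟨d+2, by omega⟩
  obtain ⟨ι, C', hC', hcard, hsub⟩ := (hC.comp_equiv τ).exists_extension
    (card_swap_le_specialSize (by omega) hC0 hCi hCd1 hCd2) sum_specialSize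
  have hnew : (univ.map ι)ᶜ.card < r := by
    rw [card_compl, card_map, card_univ, Fintype.card_fin, Fintype.card_fin, hN,
      show (d+2)*(r-1) = (d+1)*(r-1) + (r-1) by ring]
    omega
  exact BMZ.of_extension ι hnew (fun j => ⟨τ j, by simpa [τ] using hsub (τ j)⟩)
    (euclideanSnoc d) (continuous_euclideanSnoc d) (injective_euclideanSnoc d)
    (hyp C' (isSpecialColoring_of_card_eq_specialSize hC' hcard))
end
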